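/- arXiv:2503.04448 — 3 statements merged into one kernel-verified Lean document; each statement's English description precedes it below -/
import Mathlib

section
/- Let ρ ∈ (0,1), let π be a bounded probability density on [0,1], and let a : [0,1]² → ℝ be any function. If g₀ and g₁ are both bounded measurable functions on [0,1]² satisfying, for all x, y ∈ [0,1], the circular integral equation g(x,y) = ρ·π(y)·∫*_{u=x}^{y} [g(x,u) + g(y,u)] du + a(x,y), then g₀(x,y) = g₁(x,y) for all x, y ∈ [0,1]. -/
/-!
Subtracting the two equations, `d = g₀ - g₁` is a bounded fixed point of the positive linear
operator `T = circOp ρ π`, `T d (x, y) = ρ π(y) ∫*_{u=x}^{y} (d(x,u) + d(y,u)) du`.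
Let `J(x, y) = ∫*_{u=x}^{y} π` be the `π`-mass of the circular arc from `x` to `y`, and
`w = circWeight π`, `w(x, y) = π(y) J(x, y)`. With `F = distribFun π` the distribution function
of `π`, one has `J(x, u) = F(u) - F(x) + [u < x]`, and `∫ π F = ΔF² / 2` yields `T w ≤ ρ w`.
Two applications of `T` turn `|d| ≤ S` into `|d| ≤ 4ρ²S w`, and then `|d| ≤ ρⁿ 4ρ²S w` for
every `n`, so `d = 0`.
-/

open MeasureTheory

/-- Circular integral: `∫*_{u=a}^{b} h(u) du` on the circle `[0,1)`.
It equals `∫_a^b h` if `a ≤ b` and `∫_a^1 h + ∫_0^b h` if `a > b`. -/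
noncomputable def cint (a b : ℝ) (h : ℝ → ℝ) : ℝ :=
  if a ≤ b then ∫ u in a..b, h u
  else (∫ u in a..(1 : ℝ), h u) + ∫ u in (0 : ℝ)..b, h u

open Set intervalIntegral

local notation "I" => Set.Icc (0 : ℝ) 1

theorem MeasureTheory.IntegrableOn.of_measurable_of_abs_le {α : Type*} [MeasurableSpace α]
    {μ : Measure α} {s : Set α} (hs : MeasurableSet s) (hμs : μ s ≠ ⊤) {f : α → ℝ}
    (hf : Measurable f) {M : ℝ} (hM : ∀ u ∈ s, |f u| ≤ M) : IntegrableOn f s μ :=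
  Measure.integrableOn_of_bounded hμs hf.aestronglyMeasurable (ae_restrict_of_forall_mem hs hM)

theorem MeasureTheory.IntegrableOn.intervalIntegrable_of_mem_Icc {h : ℝ → ℝ} {s t a b : ℝ}
    (hh : IntegrableOn h (Icc s t)) (ha : a ∈ Icc s t) (hb : b ∈ Icc s t) :
    IntervalIntegrable h volume a b :=
  (hh.mono_set (uIcc_subset_Icc ha hb)).intervalIntegrable

theorem integral_mul_primitive_eq {f : ℝ → ℝ} {a b c a' b' : ℝ}
    (hf : IntervalIntegrable f volume a b) (hc : c ∈ uIcc a b)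
    (ha' : a' ∈ uIcc a b) (hb' : b' ∈ uIcc a b) :
    ∫ x in a'..b', f x * ∫ t in c..x, f t =
      ((∫ t in c..b', f t) ^ 2 - (∫ t in c..a', f t) ^ 2) / 2 := by
  set G : ℝ → ℝ := fun x => ∫ t in c..x, f t
  have hG : AbsolutelyContinuousOnInterval G a' b' :=
    (hf.absolutelyContinuousOnInterval_intervalIntegral hc).mono (uIcc_subset_uIcc ha' hb')
  have hderiv : ∀ᵐ x, x ∈ uIoc a' b' → f x * G x = deriv (G * G) x / 2 := by
    filter_upwards [hf.ae_hasDerivAt_integral] with x hx hx'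
    have hGx := hx (uIcc_subset_uIcc ha' hb' (uIoc_subset_uIcc hx')) c hc
    rw [(hGx.mul hGx).deriv]
    ring
  rw [integral_congr_ae hderiv, intervalIntegral.integral_div, (hG.mul hG).integral_deriv_eq_sub]
  simp only [Pi.mul_apply, G]
  ring

theorem eq_zero_of_abs_le_pow_mul {ρ C t : ℝ} (hρ0 : 0 ≤ ρ) (hρ1 : ρ < 1)
    (h : ∀ n : ℕ, |t| ≤ ρ ^ n * C) : t = 0 := by
  have hlim : Filter.Tendsto (fun n : ℕ => ρ ^ n * C) Filter.atTop (nhds 0) := by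
    simpa using (tendsto_pow_atTop_nhds_zero_of_lt_one hρ0 hρ1).mul_const C
  exact abs_nonpos_iff.1 (ge_of_tendsto' hlim h)

section Cint

theorem cint_const_mul (x y c : ℝ) (h : ℝ → ℝ) :
    cint x y (fun u => c * h u) = c * cint x y h := by
  simp only [cint, intervalIntegral.integral_const_mul]
  split_ifs <;> ring

variable {x y : ℝ}

theorem cint_sub (hx : x ∈ I) (hy : y ∈ I) {h₁ h₂ : ℝ → ℝ}
    (hh₁ : IntegrableOn h₁ I) (hh₂ : IntegrableOn h₂ I) :
    cint x y (fun u => h₁ u - h₂ u) = cint x y h₁ - cint x y h₂ := by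
  unfold cint
  split_ifs
  · exact integral_sub (hh₁.intervalIntegrable_of_mem_Icc hx hy)
      (hh₂.intervalIntegrable_of_mem_Icc hx hy)
  · rw [integral_sub (hh₁.intervalIntegrable_of_mem_Icc hx unitInterval.one_mem)
        (hh₂.intervalIntegrable_of_mem_Icc hx unitInterval.one_mem),
      integral_sub (hh₁.intervalIntegrable_of_mem_Icc unitInterval.zero_mem hy)
        (hh₂.intervalIntegrable_of_mem_Icc unitInterval.zero_mem hy)]
    ring

theorem cint_mono (hx : x ∈ I) (hy : y ∈ I) {h B : ℝ → ℝ}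
    (hh : IntegrableOn h I) (hB : IntegrableOn B I) (hle : ∀ u ∈ I, h u ≤ B u) :
    cint x y h ≤ cint x y B := by
  have key : ∀ a ∈ I, ∀ b ∈ I, a ≤ b → ∫ u in a..b, h u ≤ ∫ u in a..b, B u :=
    fun a ha b hb hab => integral_mono_on hab (hh.intervalIntegrable_of_mem_Icc ha hb)
      (hB.intervalIntegrable_of_mem_Icc ha hb)
      fun u hu => hle u ⟨ha.1.trans hu.1, hu.2.trans hb.2⟩
  unfold cint
  split_ifs with hxy
  · exact key x hx y hy hxy
  · exact add_le_add (key x hx 1 unitInterval.one_mem hx.2) (key 0 unitInterval.zero_mem y hy hy.1)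

theorem abs_cint_le (hx : x ∈ I) (hy : y ∈ I) {h B : ℝ → ℝ}
    (hh : IntegrableOn h I) (hB : IntegrableOn B I) (hle : ∀ u ∈ I, |h u| ≤ B u) :
    |cint x y h| ≤ cint x y B := by
  have hneg := cint_mono hx hy (hh.const_mul (-1)) hB
    fun u hu => by simpa using (neg_le_abs (h u)).trans (hle u hu)
  rw [cint_const_mul] at hneg
  exact abs_le.2 ⟨by linarith, cint_mono hx hy hh hB fun u hu => (le_abs_self _).trans (hle u hu)⟩

theorem cint_eq_of_integral_eq {g G : ℝ → ℝ}
    (hG : ∀ a ∈ I, ∀ b ∈ I, a ≤ b → ∫ u in a..b, g u = G b - G a) (hx : x ∈ I) (hy : y ∈ I) :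
    cint x y g = G y - G x + if y < x then G 1 - G 0 else 0 := by
  unfold cint
  split_ifs with hxy hyx hyx
  · exact absurd hxy (not_le.2 hyx)
  · rw [hG x hx y hy hxy, add_zero]
  · rw [hG x hx 1 unitInterval.one_mem hx.2, hG 0 unitInterval.zero_mem y hy hy.1]
    ring
  · exact absurd (not_le.1 hxy) hyx

end Cint

noncomputable def distribFun (π : ℝ → ℝ) (t : ℝ) : ℝ := ∫ u in (0 : ℝ)..t, π u

noncomputable def circWeight (π : ℝ → ℝ) (x y : ℝ) : ℝ := π y * cint x y π

section Density

variable {π : ℝ → ℝ} {x y : ℝ}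

theorem integral_eq_distribFun_sub (hπ : IntegrableOn π I) {a b : ℝ} (ha : a ∈ I) (hb : b ∈ I) :
    ∫ u in a..b, π u = distribFun π b - distribFun π a :=
  (integral_interval_sub_left (hπ.intervalIntegrable_of_mem_Icc unitInterval.zero_mem hb)
    (hπ.intervalIntegrable_of_mem_Icc unitInterval.zero_mem ha)).symm

theorem continuousOn_distribFun (hπ : IntegrableOn π I) : ContinuousOn (distribFun π) I := by
  rw [← uIcc_of_le zero_le_one] at hπ ⊢
  exact continuousOn_primitive_interval hπ

theorem distribFun_mono (hπ : IntegrableOn π I) (hπ0 : ∀ u ∈ I, 0 ≤ π u) {a b : ℝ}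
    (ha : a ∈ I) (hb : b ∈ I) (hab : a ≤ b) : distribFun π a ≤ distribFun π b := by
  have := integral_nonneg (μ := volume) hab fun u hu => hπ0 u ⟨ha.1.trans hu.1, hu.2.trans hb.2⟩
  rw [integral_eq_distribFun_sub hπ ha hb] at this
  linarith

theorem integral_mul_distribFun (hπ : IntegrableOn π I) {a b : ℝ} (ha : a ∈ I) (hb : b ∈ I) :
    ∫ u in a..b, π u * distribFun π u = (distribFun π b ^ 2 - distribFun π a ^ 2) / 2 :=
  integral_mul_primitive_eq
    (hπ.intervalIntegrable_of_mem_Icc unitInterval.zero_mem unitInterval.one_mem) left_mem_uIcc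
    (by simpa using ha) (by simpa using hb)

theorem cint_density_eq (hπ : IntegrableOn π I) (hπ1 : ∫ u in (0 : ℝ)..1, π u = 1)
    (hx : x ∈ I) (hy : y ∈ I) :
    cint x y π = distribFun π y - distribFun π x + if y < x then 1 else 0 := by
  rw [cint_eq_of_integral_eq (fun a ha b hb _ => integral_eq_distribFun_sub hπ ha hb) hx hy,
    show distribFun π 1 = 1 from hπ1, show distribFun π 0 = 0 from integral_same, sub_zero]

theorem cint_density_mem_Icc (hπ : IntegrableOn π I) (hπ0 : ∀ u ∈ I, 0 ≤ π u)
    (hπ1 : ∫ u in (0 : ℝ)..1, π u = 1) (hx : x ∈ I) (hy : y ∈ I) : cint x y π ∈ I := by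
  have hF {a b : ℝ} (ha : a ∈ I) (hb : b ∈ I) (hab : a ≤ b) := distribFun_mono hπ hπ0 ha hb hab
  have hx0 := hF unitInterval.zero_mem hx hx.1
  have hy0 := hF unitInterval.zero_mem hy hy.1
  have hx1 := hF hx unitInterval.one_mem hx.2
  have hy1 := hF hy unitInterval.one_mem hy.2
  rw [show distribFun π 0 = 0 from integral_same] at hx0 hy0
  rw [show distribFun π 1 = 1 from hπ1] at hx1 hy1
  rw [cint_density_eq hπ hπ1 hx hy]
  split_ifs with hyx
  · have := hF hy hx hyx.le
    constructor <;> linarith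
  · have := hF hx hy (not_lt.1 hyx)
    constructor <;> linarith

theorem integrableOn_circWeight (hπ : IntegrableOn π I) (hπ0 : ∀ u ∈ I, 0 ≤ π u)
    (hπ1 : ∫ u in (0 : ℝ)..1, π u = 1) (hx : x ∈ I) : IntegrableOn (circWeight π x) I := by
  have hstep : Measurable fun u : ℝ => if u < x then (1 : ℝ) else 0 :=
    Measurable.ite measurableSet_Iio measurable_const measurable_const
  have hmeas : AEStronglyMeasurable (fun u => cint x u π) (volume.restrict I) :=
    ((((continuousOn_distribFun hπ).aestronglyMeasurable measurableSet_Icc).sub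
      aestronglyMeasurable_const).add hstep.aestronglyMeasurable).congr
      (ae_restrict_of_forall_mem measurableSet_Icc fun u hu => (cint_density_eq hπ hπ1 hx hu).symm)
  have hbound : ∀ᵐ u ∂volume.restrict I, ‖cint x u π‖ ≤ 1 :=
    ae_restrict_of_forall_mem measurableSet_Icc fun u hu => by
      have := cint_density_mem_Icc hπ hπ0 hπ1 hx hu
      rw [Real.norm_of_nonneg this.1]
      exact this.2
  exact (hπ.bdd_mul hmeas hbound).congr (ae_of_all _ fun u => mul_comm _ _)

theorem circWeight_le (hπ : IntegrableOn π I) (hπ0 : ∀ u ∈ I, 0 ≤ π u)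
    (hπ1 : ∫ u in (0 : ℝ)..1, π u = 1) (hx : x ∈ I) (hy : y ∈ I) :
    circWeight π x y ≤ π y * (distribFun π y - distribFun π x + 1) := by
  rw [circWeight, cint_density_eq hπ hπ1 hx hy]
  gcongr
  · exact hπ0 y hy
  · split_ifs <;> norm_num

theorem circWeight_eq_of_le (hπ : IntegrableOn π I) (hπ1 : ∫ u in (0 : ℝ)..1, π u = 1)
    (hx : x ∈ I) (hy : y ∈ I) (hxy : x ≤ y) :
    circWeight π x y = π y * (distribFun π y - distribFun π x) := by
  rw [circWeight, cint_density_eq hπ hπ1 hx hy, if_neg (not_lt.2 hxy), add_zero]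

theorem integral_le_of_le_density_mul (hπ : IntegrableOn π I) {h : ℝ → ℝ}
    (hh : IntegrableOn h I) {a b c : ℝ} (ha : a ∈ I) (hb : b ∈ I) (hab : a ≤ b)
    (hle : ∀ u ∈ Icc a b, h u ≤ π u * (2 * distribFun π u + c)) :
    ∫ u in a..b, h u ≤
      distribFun π b ^ 2 - distribFun π a ^ 2 + c * (distribFun π b - distribFun π a) := by
  have hπab := hπ.intervalIntegrable_of_mem_Icc ha hb
  have hπF : IntervalIntegrable (fun u => π u * distribFun π u) volume a b :=
    hπab.mul_continuousOn ((continuousOn_distribFun hπ).mono (uIcc_subset_Icc ha hb))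
  calc ∫ u in a..b, h u
      ≤ ∫ u in a..b, (2 * (π u * distribFun π u) + c * π u) :=
        integral_mono_on hab (hh.intervalIntegrable_of_mem_Icc ha hb)
          ((hπF.const_mul 2).add (hπab.const_mul c)) fun u hu => (hle u hu).trans_eq (by ring)
    _ = _ := by
        rw [integral_add (hπF.const_mul 2) (hπab.const_mul c),
          intervalIntegral.integral_const_mul, intervalIntegral.integral_const_mul,
          integral_mul_distribFun hπ ha hb, integral_eq_distribFun_sub hπ ha hb]
        ring

theorem cint_circWeight_le (hπ : IntegrableOn π I) (hπ0 : ∀ u ∈ I, 0 ≤ π u)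
    (hπ1 : ∫ u in (0 : ℝ)..1, π u = 1) (hx : x ∈ I) (hy : y ∈ I) :
    cint x y (fun u => circWeight π x u + circWeight π y u) ≤ cint x y π := by
  have hF0 : distribFun π 0 = 0 := integral_same
  have hF1 : distribFun π 1 = 1 := hπ1
  have hint : IntegrableOn (fun u => circWeight π x u + circWeight π y u) I :=
    (integrableOn_circWeight hπ hπ0 hπ1 hx).add (integrableOn_circWeight hπ hπ0 hπ1 hy)
  have hle {a u} (ha : a ∈ I) (hu : u ∈ I) := circWeight_le hπ hπ0 hπ1 ha hu
  have heq {a u} (ha : a ∈ I) (hu : u ∈ I) (hau : a ≤ u) := circWeight_eq_of_le hπ hπ1 ha hu hau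
  rw [cint_density_eq hπ hπ1 hx hy]
  rcases le_or_gt x y with hxy | hyx
  · rw [cint, if_pos hxy, if_neg (not_lt.2 hxy)]
    refine (integral_le_of_le_density_mul hπ hint hx hy hxy
      (c := 1 - distribFun π x - distribFun π y) fun u hu => ?_).trans_eq (by ring)
    have hu' : u ∈ I := ⟨hx.1.trans hu.1, hu.2.trans hy.2⟩
    linarith [heq hx hu' hu.1, hle hy hu']
  · rw [cint, if_neg (not_le.2 hyx), if_pos hyx]
    refine (add_le_add
      (integral_le_of_le_density_mul hπ hint hx unitInterval.one_mem hx.2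
        (c := -distribFun π x - distribFun π y) fun u hu => ?_)
      (integral_le_of_le_density_mul hπ hint unitInterval.zero_mem hy hy.1
        (c := 2 - distribFun π x - distribFun π y) fun u hu => ?_)).trans_eq ?_
    · have hu' : u ∈ I := ⟨hx.1.trans hu.1, hu.2⟩
      linarith [heq hx hu' hu.1, heq hy hu' (hyx.le.trans hu.1)]
    · have hu' : u ∈ I := ⟨hu.1, hu.2.trans hy.2⟩
      linarith [hle hx hu', hle hy hu']
    · rw [hF1, hF0]
      ring

end Density

noncomputable def circOp (ρ : ℝ) (π : ℝ → ℝ) (g : ℝ → ℝ → ℝ) (x y : ℝ) : ℝ :=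
  ρ * π y * cint x y (fun u => g x u + g y u)

section CircOp

theorem circOp_const_mul (ρ : ℝ) (π : ℝ → ℝ) (c : ℝ) (g : ℝ → ℝ → ℝ) (x y : ℝ) :
    circOp ρ π (fun x y => c * g x y) x y = c * circOp ρ π g x y := by
  simp only [circOp, ← mul_add, cint_const_mul]
  ring

theorem circOp_density (ρ : ℝ) (π : ℝ → ℝ) (c x y : ℝ) :
    circOp ρ π (fun _ u => c * π u) x y = 2 * ρ * c * circWeight π x y := by
  have hsum : (fun u => c * π u + c * π u) = fun u => 2 * c * π u := by
    ext u
    ring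
  rw [circOp, hsum, cint_const_mul, circWeight]
  ring

variable {ρ : ℝ} {π : ℝ → ℝ} {x y : ℝ}

theorem circOp_sub {g₀ g₁ : ℝ → ℝ → ℝ} (hg₀ : ∀ x ∈ I, IntegrableOn (g₀ x) I)
    (hg₁ : ∀ x ∈ I, IntegrableOn (g₁ x) I) (hx : x ∈ I) (hy : y ∈ I) :
    circOp ρ π g₀ x y - circOp ρ π g₁ x y = circOp ρ π (fun x y => g₀ x y - g₁ x y) x y := by
  rw [circOp, circOp, circOp, ← mul_sub,
    ← cint_sub (h₁ := fun u => g₀ x u + g₀ y u) (h₂ := fun u => g₁ x u + g₁ y u) hx hy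
      ((hg₀ x hx).add (hg₀ y hy)) ((hg₁ x hx).add (hg₁ y hy))]
  congr 2
  ext u
  ring

theorem abs_circOp_le (hρ : 0 ≤ ρ) (hπy : 0 ≤ π y) {d e : ℝ → ℝ → ℝ}
    (hd : ∀ x ∈ I, IntegrableOn (d x) I) (he : ∀ x ∈ I, IntegrableOn (e x) I)
    (hde : ∀ x ∈ I, ∀ u ∈ I, |d x u| ≤ e x u) (hx : x ∈ I) (hy : y ∈ I) :
    |circOp ρ π d x y| ≤ circOp ρ π e x y := by
  rw [circOp, circOp, abs_mul, abs_of_nonneg (mul_nonneg hρ hπy)]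
  refine mul_le_mul_of_nonneg_left (abs_cint_le hx hy ((hd x hx).add (hd y hy))
    ((he x hx).add (he y hy)) fun u hu => ?_) (mul_nonneg hρ hπy)
  exact (abs_add_le _ _).trans (add_le_add (hde x hx u hu) (hde y hy u hu))

theorem circOp_const_le (hρ : 0 ≤ ρ) (hπy : 0 ≤ π y) {S : ℝ} (hS : 0 ≤ S)
    (hx : x ∈ I) (hy : y ∈ I) : circOp ρ π (fun _ _ => S) x y ≤ 2 * ρ * S * π y := by
  have hlen : cint x y (fun _ => 1) ≤ 1 :=
    (cint_density_mem_Icc (integrableOn_const measure_Icc_lt_top.ne) (fun _ _ => zero_le_one)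
      (by simp) hx hy).2
  have hconst := cint_const_mul x y (S + S) (fun _ => 1)
  simp only [mul_one] at hconst
  rw [circOp, hconst]
  calc ρ * π y * ((S + S) * cint x y fun _ => 1) ≤ ρ * π y * ((S + S) * 1) :=
        mul_le_mul_of_nonneg_left (mul_le_mul_of_nonneg_left hlen (by linarith))
          (mul_nonneg hρ hπy)
    _ = 2 * ρ * S * π y := by ring

theorem circOp_circWeight_le (hρ : 0 ≤ ρ) (hπ : IntegrableOn π I) (hπ0 : ∀ u ∈ I, 0 ≤ π u)
    (hπ1 : ∫ u in (0 : ℝ)..1, π u = 1) (hx : x ∈ I) (hy : y ∈ I) :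
    circOp ρ π (circWeight π) x y ≤ ρ * circWeight π x y := by
  rw [circOp, circWeight, ← mul_assoc]
  exact mul_le_mul_of_nonneg_left (cint_circWeight_le hπ hπ0 hπ1 hx hy)
    (mul_nonneg hρ (hπ0 y hy))

end CircOp

theorem eq_zero_of_eq_circOp {ρ : ℝ} (hρ0 : 0 ≤ ρ) (hρ1 : ρ < 1) {π : ℝ → ℝ}
    (hπ : IntegrableOn π I) (hπ0 : ∀ u ∈ I, 0 ≤ π u) (hπ1 : ∫ u in (0 : ℝ)..1, π u = 1)
    {M : ℝ} (hπM : ∀ u ∈ I, π u ≤ M) {d : ℝ → ℝ → ℝ} (hd : ∀ x ∈ I, IntegrableOn (d x) I)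
    {S : ℝ} (hS : ∀ x ∈ I, ∀ y ∈ I, |d x y| ≤ S)
    (hfix : ∀ x ∈ I, ∀ y ∈ I, d x y = circOp ρ π d x y) :
    ∀ x ∈ I, ∀ y ∈ I, d x y = 0 := by
  have step : ∀ e : ℝ → ℝ → ℝ, (∀ x ∈ I, IntegrableOn (e x) I) →
      (∀ x ∈ I, ∀ y ∈ I, |d x y| ≤ e x y) → ∀ x ∈ I, ∀ y ∈ I, |d x y| ≤ circOp ρ π e x y := by
    intro e he hde x hx y hy
    rw [hfix x hx y hy]
    exact abs_circOp_le hρ0 (hπ0 y hy) hd he hde hx hy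
  have hS0 : 0 ≤ S := (abs_nonneg _).trans (hS 0 unitInterval.zero_mem 0 unitInterval.zero_mem)
  have hdensity : ∀ x ∈ I, ∀ y ∈ I, |d x y| ≤ (2 * ρ * S) * π y := fun x hx y hy =>
    (step _ (fun _ _ => integrableOn_const measure_Icc_lt_top.ne) hS x hx y hy).trans
      (circOp_const_le hρ0 (hπ0 y hy) hS0 hx hy)
  have hcoef : ∀ n : ℕ, 0 ≤ ρ ^ n * (4 * ρ ^ 2 * S) := fun n =>
    mul_nonneg (pow_nonneg hρ0 n) (mul_nonneg (by positivity) hS0)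
  have hweight : ∀ n : ℕ, ∀ x ∈ I, ∀ y ∈ I,
      |d x y| ≤ ρ ^ n * (4 * ρ ^ 2 * S) * circWeight π x y := by
    intro n
    induction n with
    | zero =>
      intro x hx y hy
      refine (step _ (fun _ _ => hπ.const_mul _) hdensity x hx y hy).trans_eq ?_
      rw [circOp_density]
      ring
    | succ n ih =>
      intro x hx y hy
      refine (step _ (fun x hx => (integrableOn_circWeight hπ hπ0 hπ1 hx).const_mul _) ih
        x hx y hy).trans ?_
      rw [circOp_const_mul]
      exact (mul_le_mul_of_nonneg_left (circOp_circWeight_le hρ0 hπ hπ0 hπ1 hx hy)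
        (hcoef n)).trans_eq (by ring)
  intro x hx y hy
  have hwM : circWeight π x y ≤ M :=
    calc circWeight π x y ≤ π y * 1 :=
          mul_le_mul_of_nonneg_left (cint_density_mem_Icc hπ hπ0 hπ1 hx hy).2 (hπ0 y hy)
      _ ≤ M := by simpa using hπM y hy
  exact eq_zero_of_abs_le_pow_mul hρ0 hρ1 fun n => (hweight n x hx y hy).trans
    ((mul_le_mul_of_nonneg_left hwM (hcoef n)).trans_eq (mul_assoc _ _ _))

/-- Uniqueness of bounded measurable solutions of the circular integral equation
`g(x,y) = ρ·π(y)·∫*_{u=x}^{y} [g(x,u) + g(y,u)] du + a(x,y)`. -/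
theorem unique_bounded_solution_circular_integral_equation
    (ρ : ℝ) (hρ : ρ ∈ Set.Ioo (0 : ℝ) 1)
    (π : ℝ → ℝ) (hπmeas : Measurable π)
    (hπnn : ∀ x ∈ Set.Icc (0 : ℝ) 1, 0 ≤ π x)
    (hπbd : ∃ M : ℝ, ∀ x ∈ Set.Icc (0 : ℝ) 1, π x ≤ M)
    (hπint : (∫ u in (0 : ℝ)..1, π u) = 1)
    (a : ℝ → ℝ → ℝ)
    (g₀ g₁ : ℝ → ℝ → ℝ)
    (hg₀meas : Measurable (Function.uncurry g₀))
    (hg₁meas : Measurable (Function.uncurry g₁))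
    (hg₀bd : ∃ M : ℝ, ∀ x ∈ Set.Icc (0 : ℝ) 1, ∀ y ∈ Set.Icc (0 : ℝ) 1, |g₀ x y| ≤ M)
    (hg₁bd : ∃ M : ℝ, ∀ x ∈ Set.Icc (0 : ℝ) 1, ∀ y ∈ Set.Icc (0 : ℝ) 1, |g₁ x y| ≤ M)
    (heq₀ : ∀ x ∈ Set.Icc (0 : ℝ) 1, ∀ y ∈ Set.Icc (0 : ℝ) 1,
      g₀ x y = ρ * π y * cint x y (fun u => g₀ x u + g₀ y u) + a x y)
    (heq₁ : ∀ x ∈ Set.Icc (0 : ℝ) 1, ∀ y ∈ Set.Icc (0 : ℝ) 1,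
      g₁ x y = ρ * π y * cint x y (fun u => g₁ x u + g₁ y u) + a x y) :
    ∀ x ∈ Set.Icc (0 : ℝ) 1, ∀ y ∈ Set.Icc (0 : ℝ) 1, g₀ x y = g₁ x y := by
  obtain ⟨Mπ, hMπ⟩ := hπbd
  obtain ⟨M₀, hM₀⟩ := hg₀bd
  obtain ⟨M₁, hM₁⟩ := hg₁bd
  have hπ : IntegrableOn π I := .of_measurable_of_abs_le measurableSet_Icc
    measure_Icc_lt_top.ne hπmeas fun u hu => (abs_of_nonneg (hπnn u hu)).trans_le (hMπ u hu)
  have hrow₀ : ∀ x ∈ I, IntegrableOn (g₀ x) I := fun x hx =>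
    .of_measurable_of_abs_le measurableSet_Icc measure_Icc_lt_top.ne
      (hg₀meas.comp measurable_prodMk_left) (hM₀ x hx)
  have hrow₁ : ∀ x ∈ I, IntegrableOn (g₁ x) I := fun x hx =>
    .of_measurable_of_abs_le measurableSet_Icc measure_Icc_lt_top.ne
      (hg₁meas.comp measurable_prodMk_left) (hM₁ x hx)
  have hfix : ∀ x ∈ I, ∀ y ∈ I, g₀ x y - g₁ x y = circOp ρ π (fun x y => g₀ x y - g₁ x y) x y := by
    intro x hx y hy
    rw [← circOp_sub hrow₀ hrow₁ hx hy, circOp, circOp, heq₀ x hx y hy, heq₁ x hx y hy]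
    ring
  have hdiff := eq_zero_of_eq_circOp hρ.1.le hρ.2 hπ hπnn hπint hMπ
    (fun x hx => (hrow₀ x hx).sub (hrow₁ x hx))
    (fun x hx y hy => (abs_sub _ _).trans (add_le_add (hM₀ x hx y hy) (hM₁ x hx y hy))) hfix
  exact fun x hx y hy => sub_eq_zero.1 (hdiff x hx y hy)
end

section
/- Let h : [0,1] → [0,∞) be integrable with ∫_0^1 h(u) du = 1. Then for all x, y ∈ [0,1]: ∫*_{u=x}^{y} h(u) · ( ∫*_{z=x}^{u} h(z) dz + ∫*_{z=y}^{u} h(z) dz ) du = ∫*_{u=x}^{y} h(u) du. -/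
open MeasureTheory

/-! Let `H u = ∫_0^u h`. It is absolutely continuous with `H' = h` almost everywhere, so the
fundamental theorem of calculus for absolutely continuous functions gives
`∫_a^b h H = (H(b)² - H(a)²) / 2`. Since `∫_0^1 h = 1`, a circular integral `∫*_a^u h` equals
`H(u) - H(a) + [u < a]`; hence on each of the at most two arcs making up the outer circular
integral the integrand is `h (2H + k)` for a constant `k`, and the identity reduces to a
polynomial identity in `H(x)` and `H(y)`. -/

open intervalIntegral Set
open scoped Interval

theorem integral_mul_primitive_eq_s1 {h : ℝ → ℝ} {p q a b c : ℝ}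
    (hh : IntervalIntegrable h volume p q) (ha : a ∈ [[p, q]]) (hb : b ∈ [[p, q]])
    (hc : c ∈ [[p, q]]) :
    ∫ u in a..b, h u * ∫ z in c..u, h z =
      ((∫ z in c..b, h z) ^ 2 - (∫ z in c..a, h z) ^ 2) / 2 := by
  set F : ℝ → ℝ := fun u => ∫ z in c..u, h z
  have hF : AbsolutelyContinuousOnInterval F a b :=
    (hh.absolutelyContinuousOnInterval_intervalIntegral hc).mono (uIcc_subset_uIcc ha hb)
  have hderiv : ∀ᵐ u, u ∈ Ι a b → deriv F u = h u := by
    filter_upwards [hh.ae_hasDerivAt_integral] with u hu hmem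
    exact (hu (uIcc_subset_uIcc ha hb (uIoc_subset_uIcc hmem)) c hc).deriv
  calc ∫ u in a..b, h u * F u
      = (∫ u in a..b, deriv F u * F u + F u * deriv F u) / 2 := by
        rw [eq_div_iff two_ne_zero, ← intervalIntegral.integral_mul_const]
        refine integral_congr_ae ?_
        filter_upwards [hderiv] with u hu hmem
        rw [hu hmem]
        ring
    _ = (F b ^ 2 - F a ^ 2) / 2 := by
        rw [hF.integral_deriv_mul_eq_sub hF]
        ring

theorem IntervalIntegrable.of_mem_Icc {f : ℝ → ℝ} {p q a b : ℝ}
    (hf : IntervalIntegrable f volume p q) (hpq : p ≤ q) (ha : a ∈ Icc p q) (hb : b ∈ Icc p q) :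
    IntervalIntegrable f volume a b :=
  hf.mono_set (by rw [uIcc_of_le hpq]; exact uIcc_subset_Icc ha hb)

theorem cint_eq_integral_sub_add {f : ℝ → ℝ} (hf : IntervalIntegrable f volume 0 1) {a b : ℝ}
    (ha : a ∈ Icc (0 : ℝ) 1) (hb : b ∈ Icc (0 : ℝ) 1) :
    cint a b f = (∫ u in (0 : ℝ)..b, f u) - (∫ u in (0 : ℝ)..a, f u) +
      if b < a then ∫ u in (0 : ℝ)..1, f u else 0 := by
  have h0 : (0 : ℝ) ∈ Icc (0 : ℝ) 1 := left_mem_Icc.2 zero_le_one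
  have hone : (1 : ℝ) ∈ Icc (0 : ℝ) 1 := right_mem_Icc.2 zero_le_one
  unfold cint
  split_ifs with hab hba hba
  · exact absurd hab (not_le.2 hba)
  · rw [integral_interval_sub_left (hf.of_mem_Icc zero_le_one h0 hb)
      (hf.of_mem_Icc zero_le_one h0 ha), add_zero]
  · rw [← integral_interval_sub_left (hf.of_mem_Icc zero_le_one h0 hone)
      (hf.of_mem_Icc zero_le_one h0 ha)]
    ring
  · exact absurd (le_of_not_gt hba) hab

theorem integral_mul_cint_add_cint {h : ℝ → ℝ} (hint : IntervalIntegrable h volume 0 1)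
    (h1 : (∫ u in (0 : ℝ)..1, h u) = 1) {x y a b k : ℝ}
    (hx : x ∈ Icc (0 : ℝ) 1) (hy : y ∈ Icc (0 : ℝ) 1)
    (ha : a ∈ Icc (0 : ℝ) 1) (hb : b ∈ Icc (0 : ℝ) 1) (hab : a ≤ b)
    (hk : ∀ u ∈ Ioo a b, ((if u < x then 1 else 0) + if u < y then 1 else 0) = k) :
    ∫ u in a..b, h u * (cint x u h + cint y u h) =
      (∫ z in (0 : ℝ)..b, h z) ^ 2 - (∫ z in (0 : ℝ)..a, h z) ^ 2 +
        (k - (∫ z in (0 : ℝ)..x, h z) - ∫ z in (0 : ℝ)..y, h z) *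
          ((∫ z in (0 : ℝ)..b, h z) - ∫ z in (0 : ℝ)..a, h z) := by
  set H : ℝ → ℝ := fun t => ∫ z in (0 : ℝ)..t, h z
  have hI : [[(0 : ℝ), 1]] = Icc 0 1 := uIcc_of_le zero_le_one
  have h0 : (0 : ℝ) ∈ Icc (0 : ℝ) 1 := left_mem_Icc.2 zero_le_one
  have hsub : [[a, b]] ⊆ Icc 0 1 := uIcc_subset_Icc ha hb
  have hHh : IntervalIntegrable (fun u => h u * H u) volume a b :=
    (hint.of_mem_Icc zero_le_one ha hb).mul_continuousOn
      ((hint.absolutelyContinuousOnInterval_intervalIntegral (hI ▸ h0)).continuousOn.mono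
        (hI ▸ hsub))
  calc ∫ u in a..b, h u * (cint x u h + cint y u h)
      = ∫ u in a..b, 2 * (h u * H u) + (k - H x - H y) * h u := by
        refine integral_congr_Ioo_of_le hab fun u hu => ?_
        have hu' : u ∈ Icc (0 : ℝ) 1 := ⟨ha.1.trans hu.1.le, hu.2.le.trans hb.2⟩
        simp only [cint_eq_integral_sub_add hint hx hu', cint_eq_integral_sub_add hint hy hu',
          h1, ← hk u hu]
        split_ifs <;> ring
    _ = 2 * (∫ u in a..b, h u * H u) + (k - H x - H y) * ∫ u in a..b, h u := by
        rw [integral_add (hHh.const_mul 2) ((hint.of_mem_Icc zero_le_one ha hb).const_mul _),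
          intervalIntegral.integral_const_mul, intervalIntegral.integral_const_mul]
    _ = H b ^ 2 - H a ^ 2 + (k - H x - H y) * (H b - H a) := by
        rw [integral_mul_primitive_eq_s1 hint (hI ▸ ha) (hI ▸ hb) (hI ▸ h0),
          ← integral_interval_sub_left (hint.of_mem_Icc zero_le_one h0 hb)
            (hint.of_mem_Icc zero_le_one h0 ha)]
        ring

theorem circular_double_integral_identity_general
    (h : ℝ → ℝ)
    (hint : IntervalIntegrable h volume 0 1)
    (h1 : (∫ u in (0 : ℝ)..1, h u) = 1) :
    ∀ x ∈ Set.Icc (0 : ℝ) 1, ∀ y ∈ Set.Icc (0 : ℝ) 1,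
      cint x y (fun u => h u * (cint x u h + cint y u h)) = cint x y h := by
  intro x hx y hy
  have h0 : (0 : ℝ) ∈ Icc (0 : ℝ) 1 := left_mem_Icc.2 zero_le_one
  have hone : (1 : ℝ) ∈ Icc (0 : ℝ) 1 := right_mem_Icc.2 zero_le_one
  rw [cint_eq_integral_sub_add hint hx hy, h1]
  rcases le_or_gt x y with hxy | hyx
  · rw [cint, if_pos hxy, if_neg (not_lt.2 hxy),
      integral_mul_cint_add_cint hint h1 hx hy hx hy hxy (k := 1)
        (fun u hu => by simp [not_lt.2 hu.1.le, hu.2])]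
    ring
  · rw [cint, if_neg (not_le.2 hyx), if_pos hyx,
      integral_mul_cint_add_cint hint h1 hx hy hx hone hx.2 (k := 0)
        (fun u hu => by simp [not_lt.2 hu.1.le, not_lt.2 (hyx.trans hu.1).le]),
      integral_mul_cint_add_cint hint h1 hx hy h0 hy hy.1 (k := 2)
        (fun u hu => by simp only [if_pos hu.2, if_pos (hu.2.trans hyx)]; norm_num),
      h1, integral_same]
    ring

/-- For an integrable `h : [0,1] → [0,∞)` with `∫_0^1 h = 1`, the circular
interchange-of-integration identity
`∫*_{u=x}^{y} h(u)·(∫*_{z=x}^{u} h(z) dz + ∫*_{z=y}^{u} h(z) dz) du = ∫*_{u=x}^{y} h(u) du`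
holds for all `x, y ∈ [0,1]`. -/
theorem circular_double_integral_identity
    (h : ℝ → ℝ)
    (hmeas : Measurable h)
    (hnn : ∀ u ∈ Set.Icc (0 : ℝ) 1, 0 ≤ h u)
    (hint : IntervalIntegrable h volume 0 1)
    (h1 : (∫ u in (0 : ℝ)..1, h u) = 1) :
    ∀ x ∈ Set.Icc (0 : ℝ) 1, ∀ y ∈ Set.Icc (0 : ℝ) 1,
      cint x y (fun u => h u * (cint x u h + cint y u h)) = cint x y h :=
  circular_double_integral_identity_general h hint h1
end

section
/- Let ρ ∈ (0,1), let π be a bounded probability density on [0,1], and let c ≥ 0. Define f̃(x,y) = (c/(1−ρ))·π(y)·∫*_{u=x}^{y} π(u) du. Then for all x, y ∈ [0,1]: f̃(x,y) = ρ·π(y)·∫*_{u=x}^{y} [f̃(x,u) + f̃(y,u)] du + c·π(y)·∫*_{u=x}^{y} π(u) du. -/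
open MeasureTheory

lemma sq_half (f : ℝ → ℝ) (hf : Measurable f) (a b : ℝ) (hab : a ≤ b)
    (hint : IntegrableOn f (Set.Icc a b)) :
    (∫ u in a..b, f u * ∫ v in a..u, f v) = (∫ u in a..b, f u) ^ 2 / 2 := by
  set μ := volume.restrict (Set.Ioc a b) with hμdef
  have hfμ : Integrable f μ := hint.mono_set Set.Ioc_subset_Icc_self
  have hsetm : MeasurableSet {p : ℝ × ℝ | p.2 ≤ p.1} :=
    measurableSet_le measurable_snd measurable_fst
  have hprod : Integrable (fun p : ℝ × ℝ => f p.1 * f p.2) (μ.prod μ) := hfμ.mul_prod hfμ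
  set F : ℝ × ℝ → ℝ := fun p => if p.2 ≤ p.1 then f p.1 * f p.2 else 0 with hF
  have hFeq : F = Set.indicator {p : ℝ × ℝ | p.2 ≤ p.1} (fun p => f p.1 * f p.2) := by
    funext p; by_cases h : p.2 ≤ p.1 <;> simp [hF, Set.indicator_apply, h]
  have hFint : Integrable F (μ.prod μ) := by
    rw [hFeq]; exact hprod.indicator hsetm
  set I := ∫ u in a..b, f u with hI
  have hiiab : IntervalIntegrable f volume a b :=
    IntegrableOn.intervalIntegrable (by rwa [Set.uIcc_of_le hab])
  have hiisub : ∀ u ∈ Set.Icc a b, IntervalIntegrable f volume a u ∧ IntervalIntegrable f volume u b := by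
    intro u hu
    constructor
    · exact IntegrableOn.intervalIntegrable
        (by rw [Set.uIcc_of_le hu.1]; exact hint.mono_set (Set.Icc_subset_Icc le_rfl hu.2))
    · exact IntegrableOn.intervalIntegrable
        (by rw [Set.uIcc_of_le hu.2]; exact hint.mono_set (Set.Icc_subset_Icc hu.1 le_rfl))
  have hA : (∫ u, ∫ v, F (u, v) ∂μ ∂μ) = ∫ u in a..b, f u * ∫ v in a..u, f v := by
    rw [intervalIntegral.integral_of_le hab]
    apply integral_congr_ae
    filter_upwards [ae_restrict_mem measurableSet_Ioc] with u hu
    have h1 : (fun v => F (u, v)) = Set.indicator (Set.Iic u) (fun v => f u * f v) := by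
      funext v; by_cases h : v ≤ u <;> simp [hF, Set.indicator_apply, h]
    rw [h1, hμdef, integral_indicator measurableSet_Iic,
      Measure.restrict_restrict measurableSet_Iic]
    have h2 : Set.Iic u ∩ Set.Ioc a b = Set.Ioc a u := by
      ext t
      simp only [Set.mem_inter_iff, Set.mem_Iic, Set.mem_Ioc]
      constructor
      · rintro ⟨h1', h2', _⟩; exact ⟨h2', h1'⟩
      · rintro ⟨h1', h2'⟩; exact ⟨h2', h1', h2'.trans hu.2⟩
    rw [h2, MeasureTheory.integral_const_mul, intervalIntegral.integral_of_le hu.1.le]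
  have hB : (∫ v, ∫ u, F (u, v) ∂μ ∂μ)
      = ∫ u in a..b, f u * (I - ∫ v in a..u, f v) := by
    rw [intervalIntegral.integral_of_le hab]
    apply integral_congr_ae
    filter_upwards [ae_restrict_mem measurableSet_Ioc] with v hv
    have h1 : (fun u => F (u, v)) = Set.indicator (Set.Ici v) (fun u => f u * f v) := by
      funext u; by_cases h : v ≤ u <;> simp [hF, Set.indicator_apply, h]
    rw [h1, hμdef, integral_indicator measurableSet_Ici,
      Measure.restrict_restrict measurableSet_Ici]
    have h2 : Set.Ici v ∩ Set.Ioc a b = Set.Icc v b := by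
      ext t
      simp only [Set.mem_inter_iff, Set.mem_Ici, Set.mem_Ioc, Set.mem_Icc]
      constructor
      · rintro ⟨h1', _, h3'⟩; exact ⟨h1', h3'⟩
      · rintro ⟨h1', h2'⟩; exact ⟨h1', hv.1.trans_le h1', h2'⟩
    rw [h2, integral_Icc_eq_integral_Ioc, integral_mul_const,
      ← intervalIntegral.integral_of_le hv.2]
    have hvmem : v ∈ Set.Icc a b := ⟨hv.1.le, hv.2⟩
    have hadj : (∫ t in a..v, f t) + (∫ t in v..b, f t) = I :=
      intervalIntegral.integral_add_adjacent_intervals (hiisub v hvmem).1 (hiisub v hvmem).2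
    have : (∫ t in v..b, f t) = I - ∫ t in a..v, f t := by linarith
    rw [this, mul_comm]
  have hswap : (∫ u, ∫ v, F (u, v) ∂μ ∂μ) = ∫ v, ∫ u, F (u, v) ∂μ ∂μ :=
    integral_integral_swap hFint
  have hGcont : ContinuousOn (fun u => ∫ v in a..u, f v) (Set.uIcc a b) :=
    intervalIntegral.continuousOn_primitive_interval (by rwa [Set.uIcc_of_le hab])
  have h1int : IntervalIntegrable (fun u => f u * ∫ v in a..u, f v) volume a b :=
    hiiab.mul_continuousOn hGcont
  have h2int : IntervalIntegrable (fun u => f u * (I - ∫ v in a..u, f v)) volume a b :=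
    hiiab.mul_continuousOn (continuousOn_const.sub hGcont)
  have hsum : (∫ u in a..b, f u * ∫ v in a..u, f v)
      + (∫ u in a..b, f u * (I - ∫ v in a..u, f v)) = I * I := by
    rw [← intervalIntegral.integral_add h1int h2int]
    have : (∫ u in a..b, (f u * ∫ v in a..u, f v) + f u * (I - ∫ v in a..u, f v))
        = ∫ u in a..b, I * f u := by
      apply intervalIntegral.integral_congr
      intro u _; ring
    rw [this, intervalIntegral.integral_const_mul]
  have heq : (∫ u in a..b, f u * ∫ v in a..u, f v)
      = ∫ u in a..b, f u * (I - ∫ v in a..u, f v) := by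
    rw [← hA, hswap, hB]
  have : I ^ 2 = I * I := sq I
  linarith

lemma seg (f : ℝ → ℝ) (hf : Measurable f) (a b : ℝ) (hab : a ≤ b)
    (hint : IntegrableOn f (Set.Icc a b)) (p : ℝ) :
    (∫ u in a..b, f u * (p + 2 * ∫ v in a..u, f v))
      = p * (∫ u in a..b, f u) + (∫ u in a..b, f u) ^ 2 := by
  have hiiab : IntervalIntegrable f volume a b :=
    IntegrableOn.intervalIntegrable (by rwa [Set.uIcc_of_le hab])
  have hGcont : ContinuousOn (fun u => ∫ v in a..u, f v) (Set.uIcc a b) :=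
    intervalIntegral.continuousOn_primitive_interval (by rwa [Set.uIcc_of_le hab])
  have h1int : IntervalIntegrable (fun u => f u * ∫ v in a..u, f v) volume a b :=
    hiiab.mul_continuousOn hGcont
  have step : (∫ u in a..b, f u * (p + 2 * ∫ v in a..u, f v))
      = ∫ u in a..b, (p * f u + 2 * (f u * ∫ v in a..u, f v)) := by
    apply intervalIntegral.integral_congr
    intro u _; ring
  rw [step, intervalIntegral.integral_add (hiiab.const_mul p) (h1int.const_mul 2),
    intervalIntegral.integral_const_mul, intervalIntegral.integral_const_mul,
    sq_half f hf a b hab hint]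
  ring

/-- The transported uniform-case solution
`f̃(x,y) = (c/(1−ρ))·π(y)·∫*_{u=x}^{y} π(u) du` satisfies
`f̃(x,y) = ρ·π(y)·∫*_{u=x}^{y} [f̃(x,u) + f̃(y,u)] du + c·π(y)·∫*_{u=x}^{y} π(u) du`. -/
theorem transported_uniform_solution_solves_equation
    (ρ : ℝ) (hρ : ρ ∈ Set.Ioo (0 : ℝ) 1)
    (π : ℝ → ℝ) (hπmeas : Measurable π)
    (hπnn : ∀ x ∈ Set.Icc (0 : ℝ) 1, 0 ≤ π x)
    (hπbd : ∃ M : ℝ, ∀ x ∈ Set.Icc (0 : ℝ) 1, π x ≤ M)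
    (hπint : (∫ u in (0 : ℝ)..1, π u) = 1)
    (c : ℝ) (hc : 0 ≤ c)
    (ftil : ℝ → ℝ → ℝ)
    (hftil : ∀ x y : ℝ, ftil x y = c / (1 - ρ) * π y * cint x y π) :
    ∀ x ∈ Set.Icc (0 : ℝ) 1, ∀ y ∈ Set.Icc (0 : ℝ) 1,
      ftil x y = ρ * π y * cint x y (fun u => ftil x u + ftil y u)
        + c * π y * cint x y π := by
  obtain ⟨M, hM⟩ := hπbd
  have hIntIcc : IntegrableOn π (Set.Icc (0 : ℝ) 1) := by
    apply Measure.integrableOn_of_bounded (M := M)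
      (by simp [Real.volume_Icc] : volume (Set.Icc (0:ℝ) 1) ≠ ⊤) hπmeas.aestronglyMeasurable
    filter_upwards [ae_restrict_mem measurableSet_Icc] with u hu
    rw [Real.norm_eq_abs, abs_of_nonneg (hπnn u hu)]
    exact hM u hu
  have hii : ∀ a b : ℝ, a ∈ Set.Icc (0:ℝ) 1 → b ∈ Set.Icc (0:ℝ) 1 →
      IntervalIntegrable π volume a b := by
    intro a b ha hb
    apply IntegrableOn.intervalIntegrable
    apply hIntIcc.mono_set
    intro t ht
    rw [Set.uIcc_eq_union] at ht
    rcases ht with ht | ht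
    · exact ⟨le_trans ha.1 ht.1, le_trans ht.2 hb.2⟩
    · exact ⟨le_trans hb.1 ht.1, le_trans ht.2 ha.2⟩
  have hsplit : ∀ a b d : ℝ, a ∈ Set.Icc (0:ℝ) 1 → b ∈ Set.Icc (0:ℝ) 1 →
      d ∈ Set.Icc (0:ℝ) 1 →
      (∫ u in a..b, π u) + ∫ u in b..d, π u = ∫ u in a..d, π u :=
    fun a b d ha hb hd =>
      intervalIntegral.integral_add_adjacent_intervals (hii a b ha hb) (hii b d hb hd)
  have h1ρ : (1 : ℝ) - ρ ≠ 0 := by have := hρ.2; intro h; linarith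
  have hkey : ∀ x ∈ Set.Icc (0:ℝ) 1, ∀ y ∈ Set.Icc (0:ℝ) 1,
      cint x y (fun u => ftil x u + ftil y u) = c / (1 - ρ) * cint x y π := by
    intro x hx y hy
    set k := c / (1 - ρ) with hk
    by_cases hxy : x ≤ y
    · -- case x ≤ y
      set A := ∫ u in x..y, π u with hA
      have hne : ∀ᵐ u : ℝ, u ≠ y := by
        rw [ae_iff]
        have h0 : {u : ℝ | ¬u ≠ y} = {y} := by ext u; simp
        rw [h0]
        exact measure_singleton y
      have hC : cint x y (fun u => ftil x u + ftil y u)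
          = ∫ u in x..y, k * (π u * ((1 - A) + 2 * ∫ v in x..u, π v)) := by
        rw [cint, if_pos hxy]
        apply intervalIntegral.integral_congr_ae
        filter_upwards [hne] with u huy hmem
        rw [Set.uIoc_of_le hxy] at hmem
        have hxu : x < u := hmem.1
        have huy' : u < y := lt_of_le_of_ne hmem.2 huy
        have humem : u ∈ Set.Icc (0:ℝ) 1 := ⟨le_trans hx.1 hxu.le, le_trans huy'.le hy.2⟩
        have h0 : (0:ℝ) ∈ Set.Icc (0:ℝ) 1 := by norm_num
        have h1 : (1:ℝ) ∈ Set.Icc (0:ℝ) 1 := by norm_num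
        rw [hftil, hftil, cint, if_pos hxu.le, cint, if_neg (not_le.2 huy')]
        have e2 := hsplit 0 u y h0 humem hy
        have e3 := hsplit 0 y 1 h0 hy h1
        have e4 := hsplit x u y hx humem hy
        rw [hπint] at e3
        have : (∫ u in y..1, π u) + ∫ v in (0:ℝ)..u, π v
            = 1 - A + ∫ v in x..u, π v := by rw [hA]; linarith
        rw [this]
        ring
      have hIxy : IntegrableOn π (Set.Icc x y) :=
        hIntIcc.mono_set (Set.Icc_subset_Icc hx.1 hy.2)
      rw [hC, intervalIntegral.integral_const_mul, seg π hπmeas x y hxy hIxy (1 - A),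
        cint, if_pos hxy, ← hA]
      ring
    · -- case x > y
      push_neg at hxy
      set A := ∫ u in x..1, π u with hA
      set B := ∫ u in (0:ℝ)..y, π u with hB
      have h0 : (0:ℝ) ∈ Set.Icc (0:ℝ) 1 := by norm_num
      have h1 : (1:ℝ) ∈ Set.Icc (0:ℝ) 1 := by norm_num
      have hS1 : (∫ u in x..1, (ftil x u + ftil y u))
          = ∫ u in x..1, k * (π u * ((1 - A - B) + 2 * ∫ v in x..u, π v)) := by
        apply intervalIntegral.integral_congr
        intro u hmem
        rw [Set.uIcc_of_le hx.2] at hmem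
        have hxu : x ≤ u := hmem.1
        have hyu : y ≤ u := le_trans hxy.le hxu
        have humem : u ∈ Set.Icc (0:ℝ) 1 := ⟨le_trans hx.1 hxu, hmem.2⟩
        show ftil x u + ftil y u = k * (π u * ((1 - A - B) + 2 * ∫ v in x..u, π v))
        rw [hftil, hftil, cint, if_pos hxu, cint, if_pos hyu]
        have e1 := hsplit y x u hy hx humem
        have e2 := hsplit 0 y x h0 hy hx
        have e3 := hsplit 0 x 1 h0 hx h1
        rw [hπint] at e3
        have : (∫ v in y..u, π v) = (1 - A - B) + ∫ v in x..u, π v := by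
          rw [hA, hB]; linarith
        rw [this]
        ring
      have hne : ∀ᵐ u : ℝ, u ≠ y := by
        rw [ae_iff]
        have h0' : {u : ℝ | ¬u ≠ y} = {y} := by ext u; simp
        rw [h0']
        exact measure_singleton y
      have hS2 : (∫ u in (0:ℝ)..y, (ftil x u + ftil y u))
          = ∫ u in (0:ℝ)..y, k * (π u * ((1 + A - B) + 2 * ∫ v in (0:ℝ)..u, π v)) := by
        apply intervalIntegral.integral_congr_ae
        filter_upwards [hne] with u huy hmem
        rw [Set.uIoc_of_le hy.1] at hmem
        have huy' : u < y := lt_of_le_of_ne hmem.2 huy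
        have hux : u < x := lt_trans huy' hxy
        have humem : u ∈ Set.Icc (0:ℝ) 1 := ⟨hmem.1.le, le_trans huy'.le hy.2⟩
        rw [hftil, hftil, cint, if_neg (not_le.2 hux), cint, if_neg (not_le.2 huy')]
        have e1 := hsplit 0 y 1 h0 hy h1
        rw [hπint] at e1
        have : (∫ u in y..1, π u) = 1 - B := by rw [hB]; linarith
        rw [this, hA, hB]
        ring
      have hIx1 : IntegrableOn π (Set.Icc x 1) :=
        hIntIcc.mono_set (Set.Icc_subset_Icc hx.1 le_rfl)
      have hI0y : IntegrableOn π (Set.Icc 0 y) :=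
        hIntIcc.mono_set (Set.Icc_subset_Icc le_rfl hy.2)
      rw [cint, if_neg (not_le.2 hxy), hS1, hS2,
        intervalIntegral.integral_const_mul, intervalIntegral.integral_const_mul,
        seg π hπmeas x 1 hx.2 hIx1 (1 - A - B),
        seg π hπmeas 0 y hy.1 hI0y (1 + A - B),
        cint, if_neg (not_le.2 hxy), ← hA, ← hB]
      ring
  intro x hx y hy
  rw [hftil, hkey x hx y hy]
  set C := cint x y π
  field_simp
  ring
end
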